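/- arXiv:1502.06885 — 2 statements merged into one kernel-verified Lean document; each statement's English description precedes it below -/
import Mathlib

section
/- Let F and E be number fields with E a quadratic extension of F, and let σ be the nontrivial F-algebra automorphism of E (i.e. σ : E ≃ E is an F-algebra automorphism with σ ≠ id). If ε is a unit of 𝓞_E such that w(ε) = w′(ε) for every pair of infinite places w, w′ of E having the same restriction to F, then ε·σ(ε)⁻¹ is a root of unity of E. -/
/-!
An `F`-automorphism `σ` of `E` permutes the infinite places of `E` lying over a given place
of `F`, so the hypothesis gives `w (σ ε) = (σ⁻¹ • w) ε = w ε` for every infinite place `w`.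
Hence the unit `ε / σ ε` has absolute value `1` at every infinite place, and by Kronecker's
theorem it is a root of unity.
-/

open NumberField

namespace NumberField

lemma InfinitePlace.comap_smul_algebraMap {F E : Type*} [Field F] [Field E] [Algebra F E]
    (σ : Gal(E/F)) (w : InfinitePlace E) :
    (σ • w).comap (algebraMap F E) = w.comap (algebraMap F E) := by
  rw [InfinitePlace.comap_smul]
  exact congrArg w.comap (AlgHom.comp_algebraMap (σ.symm : E →ₐ[F] E))

namespace Units

variable {K : Type*} [Field K]

lemma coe_div (u v : (𝓞 K)ˣ) : ((u / v : (𝓞 K)ˣ) : K) = u / v :=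
  eq_div_of_mul_eq (coe_ne_zero v) (by rw [← coe_mul, div_mul_cancel])

variable [NumberField K]

lemma div_mem_torsion_of_forall_infinitePlace_eq {u v : (𝓞 K)ˣ}
    (h : ∀ w : InfinitePlace K, w u = w v) : u / v ∈ torsion K :=
  (mem_torsion K).2 fun w ↦ by
    rw [coe_div, map_div₀, h, div_self ((map_ne_zero w).2 (coe_ne_zero v))]

lemma exists_pow_coe_eq_one_of_mem_torsion {u : (𝓞 K)ˣ} (hu : u ∈ torsion K) :
    ∃ n : ℕ, 0 < n ∧ (u : K) ^ n = 1 := by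
  rw [← rootsOfUnity_eq_torsion, mem_rootsOfUnity] at hu
  exact ⟨torsionOrder K, torsionOrder_pos K, by rw [← coe_pow, hu, coe_one]⟩

end Units

end NumberField

theorem stmt1_general (F E : Type*) [Field F] [Field E] [NumberField E]
    [Algebra F E]
    (σ : E ≃ₐ[F] E)
    (ε : (𝓞 E)ˣ)
    (hε : ∀ w w' : InfinitePlace E, w.comap (algebraMap F E) = w'.comap (algebraMap F E) →
        w ((ε : 𝓞 E) : E) = w' ((ε : 𝓞 E) : E)) :
    ∃ n : ℕ, 0 < n ∧ (((ε : 𝓞 E) : E) * (σ ((ε : 𝓞 E) : E))⁻¹) ^ n = 1 := by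
  set σε : (𝓞 E)ˣ := Units.map (RingOfIntegers.mapAlgEquiv σ : 𝓞 E →* 𝓞 E) ε
  have hσε : (σε : E) = σ ε := rfl
  have hplaces : ∀ w : InfinitePlace E, w ε = w σε := fun w ↦
    hε w (σ.symm • w) (InfinitePlace.comap_smul_algebraMap σ.symm w).symm
  obtain ⟨n, hn, hpow⟩ := Units.exists_pow_coe_eq_one_of_mem_torsion
    (Units.div_mem_torsion_of_forall_infinitePlace_eq hplaces)
  refine ⟨n, hn, ?_⟩
  rwa [Units.coe_div, div_eq_mul_inv, hσε] at hpow

/-- Let `E/F` be a quadratic extension of number fields and let `σ` be the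
nontrivial `F`-algebra automorphism of `E`.  If `ε` is a unit of `𝓞 E` such that
`w ε = w' ε` for every pair of infinite places `w, w'` of `E` with the same restriction to
`F`, then `ε * σ(ε)⁻¹` is a root of unity of `E`. -/
theorem stmt1 (F E : Type*) [Field F] [Field E] [NumberField F] [NumberField E]
    [Algebra F E] (hquad : Module.finrank F E = 2)
    (σ : E ≃ₐ[F] E) (hσ : σ ≠ (AlgEquiv.refl : E ≃ₐ[F] E))
    (ε : (𝓞 E)ˣ)
    (hε : ∀ w w' : InfinitePlace E, w.comap (algebraMap F E) = w'.comap (algebraMap F E) →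
        w ((ε : 𝓞 E) : E) = w' ((ε : 𝓞 E) : E)) :
    ∃ n : ℕ, 0 < n ∧ (((ε : 𝓞 E) : E) * (σ ((ε : 𝓞 E) : E))⁻¹) ^ n = 1 :=
  stmt1_general F E σ ε hε
end

section
/- Let F and E be number fields with E a quadratic extension of F, and assume that some nonzero prime ideal of 𝓞_F of odd residue characteristic ramifies in E. If ε is a unit of 𝓞_E such that ε^(2^k) lies in the image of F in E for some natural number k, then ε itself lies in the image of F in E (and hence is a unit of 𝓞_F). -/
/-!
If `η ∈ 𝓞_E` is not in `F` but `η² ∈ F`, some automorphism `σ` of `E/F` sends `η` to `-η`.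
A prime `P` of `𝓞_E` with `e(P) = 2 = [E : F]` is the only prime above `p = P ∩ 𝓞_F` and has
residue degree one, so `σ` preserves `P` and acts trivially on `𝓞_E / P`. Hence
`2η = η - σ η ∈ P`, which is impossible when neither `2` nor `η` lies in `P`. Taking square roots
`k` times handles `ε^(2^k)`.
-/

open NumberField

namespace Ideal

section

variable {R S : Type*} [CommRing R] [IsDomain R] [CommRing S] [Algebra R S]
  [Module.Finite R S] [Module.Flat R S] {p : Ideal R} [p.IsPrime]

theorem ramificationIdx_mul_inertiaDeg_le_finrank (P : Ideal S) [P.IsPrime] [P.LiesOver p] :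
    P.ramificationIdx R * P.inertiaDeg R ≤ Module.finrank R S := by
  have := (Algebra.QuasiFinite.finite_primesOver p (S := S)).fintype
  rw [← sum_ramification_inertia_eq_finrank p S]
  exact Finset.single_le_sum
    (f := fun q : p.primesOver S => q.1.ramificationIdx R * q.1.inertiaDeg R)
    (fun _ _ => Nat.zero_le _) (Finset.mem_univ ⟨P, ‹_›, ‹_›⟩)

theorem eq_of_ramificationIdx_mul_inertiaDeg_eq_finrank {P Q : Ideal S} [P.IsPrime]
    [P.LiesOver p] [Q.IsPrime] [Q.LiesOver p]
    (h : P.ramificationIdx R * P.inertiaDeg R = Module.finrank R S) : Q = P := by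
  have := (Algebra.QuasiFinite.finite_primesOver p (S := S)).fintype
  by_contra hQP
  let P' : p.primesOver S := ⟨P, ‹_›, ‹_›⟩
  let Q' : p.primesOver S := ⟨Q, ‹_›, ‹_›⟩
  have hne : Q' ≠ P' := fun h => hQP congr($h.1)
  have hQ : 0 < Q.ramificationIdx R * Q.inertiaDeg R :=
    Nat.mul_pos (ramificationIdx_pos Q R) (inertiaDeg_pos Q R)
  have hsum := Finset.sum_le_sum_of_subset_of_nonneg
    (f := fun q : p.primesOver S => q.1.ramificationIdx R * q.1.inertiaDeg R)
    (Finset.subset_univ {Q', P'}) (fun _ _ _ => Nat.zero_le _)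
  rw [Finset.sum_pair hne, sum_ramification_inertia_eq_finrank p S] at hsum
  dsimp only [P', Q'] at hsum
  omega

end

variable {R S : Type*} [CommRing R] [CommRing S] [Algebra R S] {P : Ideal S} [P.IsMaximal]

theorem exists_algebraMap_sub_mem_of_inertiaDeg_eq_one {p : Ideal R} [p.IsMaximal] [P.LiesOver p]
    (hf : P.inertiaDeg R = 1) (z : S) : ∃ y : R, algebraMap R S y - z ∈ P := by
  let := Quotient.field p
  let := Quotient.field P
  rw [inertiaDeg_eq_of_isMaximal p P] at hf
  obtain ⟨y, hy⟩ := Algebra.mem_bot.mp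
    ((Subalgebra.bot_eq_top_of_finrank_eq_one hf).symm ▸ Algebra.mem_top : Quotient.mk P z ∈ ⊥)
  obtain ⟨y, rfl⟩ := Quotient.mk_surjective y
  exact ⟨y, Quotient.eq.mp hy⟩

theorem sub_mem_of_comap_eq_of_inertiaDeg_eq_one {p : Ideal R} [p.IsMaximal] [P.LiesOver p]
    (hf : P.inertiaDeg R = 1) (σ : S →ₐ[R] S) (hσ : P.comap σ = P) (z : S) : σ z - z ∈ P := by
  obtain ⟨y, hy⟩ := exists_algebraMap_sub_mem_of_inertiaDeg_eq_one (p := p) hf z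
  have hσy : σ (algebraMap R S y - z) ∈ P := by rwa [← mem_comap, hσ]
  rw [map_sub, AlgHom.commutes] at hσy
  simpa using P.sub_mem hy hσy

end Ideal

theorem IsGalois.exists_apply_eq_neg_of_sq_mem_range {F E : Type*} [Field F] [Field E]
    [Algebra F E] [IsGalois F E] {x : E} (hx : x ∉ Set.range (algebraMap F E))
    (hx2 : x ^ 2 ∈ Set.range (algebraMap F E)) : ∃ σ : Gal(E/F), σ x = -x := by
  obtain ⟨σ, hσ⟩ := not_forall.mp (mt (InfiniteGalois.mem_range_algebraMap_iff_fixed x).mpr hx)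
  obtain ⟨a, ha⟩ := hx2
  have : σ x ^ 2 = x ^ 2 := by rw [← map_pow, ← ha, AlgEquiv.commutes]
  exact ⟨σ, ((sq_eq_sq_iff_eq_or_eq_neg).mp this).resolve_left hσ⟩

namespace NumberField

variable {F E : Type*} [Field F] [Field E] [Algebra F E]

theorem mem_range_of_sq_mem_range [NumberField F] [NumberField E]
    (hquad : Module.finrank F E = 2) {P : Ideal (𝓞 E)} [P.IsMaximal] (hP2 : (2 : 𝓞 E) ∉ P)
    (he : P.ramificationIdx (𝓞 F) = 2) {η : 𝓞 E} (hη : η ∉ P)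
    (h2 : (η : E) ^ 2 ∈ Set.range (algebraMap F E)) :
    (η : E) ∈ Set.range (algebraMap F E) := by
  by_contra hx
  have : Algebra.IsQuadraticExtension F E := ⟨hquad⟩
  obtain ⟨σ, hσ⟩ := IsGalois.exists_apply_eq_neg_of_sq_mem_range hx h2
  let τ : 𝓞 E →ₐ[𝓞 F] 𝓞 E := RingOfIntegers.mapAlgHom σ
  have hτ : τ η = -η := RingOfIntegers.ext hσ
  have hrank : Module.finrank (𝓞 F) (𝓞 E) = 2 :=
    (IsFractionRing.finrank_eq (𝓞 F) F (𝓞 E) E).symm.trans hquad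
  have hf : P.inertiaDeg (𝓞 F) = 1 := by
    have hle := Ideal.ramificationIdx_mul_inertiaDeg_le_finrank (p := P.under (𝓞 F)) P
    rw [he, hrank] at hle
    have := Ideal.inertiaDeg_pos P (𝓞 F)
    omega
  have hτP : P.comap τ = P := Ideal.eq_of_ramificationIdx_mul_inertiaDeg_eq_finrank
    (p := P.under (𝓞 F)) (by rw [he, hf, hrank])
  have h2η : 2 * η ∈ P := by
    have := Ideal.sub_mem_of_comap_eq_of_inertiaDeg_eq_one (p := P.under (𝓞 F)) hf τ hτP η
    rwa [hτ, ← neg_add', ← two_mul, neg_mem_iff] at this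
  exact hP2 ((Ideal.IsPrime.mem_or_mem inferInstance h2η).resolve_right hη)

theorem mem_range_of_pow_two_pow_mem_range [NumberField F] [NumberField E]
    (hquad : Module.finrank F E = 2) {P : Ideal (𝓞 E)} [P.IsMaximal] (hP2 : (2 : 𝓞 E) ∉ P)
    (he : P.ramificationIdx (𝓞 F) = 2) (k : ℕ) {η : 𝓞 E} (hη : η ∉ P)
    (hk : (η : E) ^ 2 ^ k ∈ Set.range (algebraMap F E)) :
    (η : E) ∈ Set.range (algebraMap F E) := by
  induction k generalizing η with
  | zero => simpa using hk
  | succ k ih =>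
    refine mem_range_of_sq_mem_range hquad hP2 he hη ?_
    have hη2 : η ^ 2 ∉ P := mt (Ideal.IsPrime.mem_of_pow_mem inferInstance 2) hη
    simpa using ih hη2 (by push_cast; rwa [← pow_mul, ← pow_succ'])

theorem exists_unit_algebraMap_eq_of_mem_range {ε : (𝓞 E)ˣ}
    (h : (ε : E) ∈ Set.range (algebraMap F E)) :
    ∃ u : (𝓞 F)ˣ, algebraMap F E u = ε := by
  obtain ⟨x, hx⟩ := h
  have hint : IsIntegral ℤ x := by
    rw [← isIntegral_algebraMap_iff (algebraMap F E).injective, hx]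
    exact (ε : 𝓞 E).2
  have hr : algebraMap (𝓞 F) (𝓞 E) ⟨x, hint⟩ = ε := RingOfIntegers.ext hx
  obtain ⟨u, hu⟩ := isUnit_of_map_unit _ _ (hr ▸ ε.isUnit)
  exact ⟨u, hu ▸ hx⟩

end NumberField

/-- Let `E/F` be a quadratic extension of number fields such that some
nonzero prime ideal of `𝓞 F` of odd residue characteristic ramifies in `E`.  If `ε` is a
unit of `𝓞 E` such that `ε ^ (2 ^ k)` lies in the image of `F` in `E` for some natural
number `k`, then `ε` itself lies in the image of `F` in `E`, and hence is (the image of) a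
unit of `𝓞 F`. -/
theorem stmt3 (F E : Type*) [Field F] [Field E] [NumberField F] [NumberField E]
    [Algebra F E] (hquad : Module.finrank F E = 2)
    (hram : ∃ p : Ideal (𝓞 F), p.IsPrime ∧ p ≠ ⊥ ∧ (2 : 𝓞 F) ∉ p ∧
      ∃ P : Ideal (𝓞 E), P.IsPrime ∧ P.comap (algebraMap (𝓞 F) (𝓞 E)) = p ∧
        Ideal.ramificationIdx' p P = 2)
    (ε : (𝓞 E)ˣ)
    (hpow : ∃ k : ℕ, ((ε : 𝓞 E) : E) ^ (2 ^ k) ∈ Set.range (algebraMap F E)) :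
    ((ε : 𝓞 E) : E) ∈ Set.range (algebraMap F E) ∧
      ∃ u : (𝓞 F)ˣ, algebraMap F E ((u : 𝓞 F) : F) = ((ε : 𝓞 E) : E) := by
  obtain ⟨p, hp, hp0, hp2, P, hP, hPp, he⟩ := hram
  obtain ⟨k, hk⟩ := hpow
  have : P.LiesOver p := ⟨hPp.symm⟩
  have : p.IsMaximal := hp.isMaximal hp0
  have : P.IsMaximal := Ideal.IsMaximal.of_liesOver_isMaximal P p
  have hP2 : (2 : 𝓞 E) ∉ P := fun h => hp2 (by rwa [← hPp, Ideal.mem_comap, map_ofNat])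
  rw [Ideal.ramificationIdx'_eq_ramificationIdx p P hp0] at he
  have hε := mem_range_of_pow_two_pow_mem_range hquad hP2 he k (P.notMem_of_isUnit ε.isUnit) hk
  exact ⟨hε, exists_unit_algebraMap_eq_of_mem_range hε⟩
end
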